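/- arXiv:2110.14174 — 2 statements merged into one kernel-verified Lean document; each statement's English description precedes it below -/
import Mathlib

section
/- If ω₁ = ⋯ = ω_N = ω_s, then the transfer function G[s] = 1 + C(sI - A)⁻¹B equals ((√N·Γ̄)² + (s + iω_s)(s + iω_r - κ/2)) / ((√N·Γ̄)² + (s + iω_s)(s + iω_r + κ/2)), where Γ̄ = √((1/N)∑_{k=1}^N Γ_k²). -/
/-!
With all spin frequencies equal, `sI - A` is an arrowhead matrix: `α = s + iω_s` on the spin
diagonal, couplings `iΓ_k` in the last row and column, and `β = s + iω_r + κ/2` in the corner.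
Since `B` only touches the cavity mode, `G[s] = 1 - κ w` with `w` the corner entry of
`(sI - A)⁻¹`. Eliminating the spin entries from the last column of `(sI - A)(sI - A)⁻¹ = 1`
gives the Schur-complement relation `(αβ + ∑ Γ_k²) w = α`, and `αβ + ∑ Γ_k² ≠ 0` because
otherwise `α = 0` and `Γ = 0`, so a spin row of `sI - A` would vanish.
-/

open Matrix Complex

/-- The system matrix A of the Tavis-Cummings linear model, indexed by `Fin N ⊕ Unit`. -/
noncomputable def TCmatA (N : ℕ) (κ ωr : ℝ) (ω Γ : Fin N → ℝ) :
    Matrix (Fin N ⊕ Unit) (Fin N ⊕ Unit) ℂ :=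
  Matrix.of fun i j =>
    match i, j with
    | Sum.inl a, Sum.inl b => if a = b then -Complex.I * (ω a : ℂ) else 0
    | Sum.inl a, Sum.inr _ => -Complex.I * (Γ a : ℂ)
    | Sum.inr _, Sum.inl b => -Complex.I * (Γ b : ℂ)
    | Sum.inr _, Sum.inr _ => -Complex.I * (ωr : ℂ) - (κ : ℂ) / 2

/-- The input matrix B as a column vector: last entry `-√κ`, others `0`. -/
noncomputable def TCcolB (N : ℕ) (κ : ℝ) : Matrix (Fin N ⊕ Unit) Unit ℂ :=
  Matrix.of fun i _ => Sum.elim (fun _ => (0 : ℂ)) (fun _ => -(Real.sqrt κ : ℂ)) i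

section Arrowhead

variable {ι K : Type*} [Fintype ι] [DecidableEq ι] [Field K]

def arrowhead (α β : K) (g : ι → K) : Matrix (ι ⊕ Unit) (ι ⊕ Unit) K :=
  fromBlocks (diagonal fun _ => α) (of fun i _ => g i) (of fun _ j => g j) (of fun _ _ => β)

theorem arrowhead_mul_apply_inl (α β : K) (g : ι → K) (X : Matrix (ι ⊕ Unit) (ι ⊕ Unit) K)
    (a : ι) (j : ι ⊕ Unit) :
    (arrowhead α β g * X) (.inl a) j = α * X (.inl a) j + g a * X (.inr ()) j := by
  simp [arrowhead, mul_apply, Fintype.sum_sum_type, diagonal_apply]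

theorem arrowhead_mul_apply_inr (α β : K) (g : ι → K) (X : Matrix (ι ⊕ Unit) (ι ⊕ Unit) K)
    (j : ι ⊕ Unit) :
    (arrowhead α β g * X) (.inr ()) j = ∑ a, g a * X (.inl a) j + β * X (.inr ()) j := by
  simp [arrowhead, mul_apply, Fintype.sum_sum_type]

theorem arrowhead_schur_mul_inv_apply_inr_inr {α β : K} {g : ι → K}
    (h : IsUnit (arrowhead α β g).det) :
    (α * β - ∑ a, g a ^ 2) * (arrowhead α β g)⁻¹ (.inr ()) (.inr ()) = α := by
  have hX := mul_nonsing_inv (arrowhead α β g) h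
  set X := (arrowhead α β g)⁻¹
  have hinl : ∀ a, α * X (.inl a) (.inr ()) + g a * X (.inr ()) (.inr ()) = 0 := fun a => by
    simpa [arrowhead_mul_apply_inl] using congrFun (congrFun hX (.inl a)) (.inr ())
  have hinr : ∑ a, g a * X (.inl a) (.inr ()) + β * X (.inr ()) (.inr ()) = 1 := by
    simpa [arrowhead_mul_apply_inr] using congrFun (congrFun hX (.inr ())) (.inr ())
  have hsum : α * ∑ a, g a * X (.inl a) (.inr ()) = -(∑ a, g a ^ 2) * X (.inr ()) (.inr ()) := by
    simp only [Finset.mul_sum, neg_mul, Finset.sum_mul, ← Finset.sum_neg_distrib]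
    exact Finset.sum_congr rfl fun a _ => by linear_combination g a * hinl a
  linear_combination α * hinr - hsum

theorem det_arrowhead_zero [Nonempty ι] (β : K) :
    (arrowhead (0 : K) β fun _ : ι => 0).det = 0 :=
  det_eq_zero_of_row_eq_zero (.inl (Classical.arbitrary ι)) fun j => by
    rcases j with j | j <;> simp [arrowhead]

end Arrowhead

theorem sum_I_mul_ofReal_sq {ι : Type*} [Fintype ι] (Γ : ι → ℝ) :
    ∑ k, (I * Γ k) ^ 2 = -∑ k, (Γ k : ℂ) ^ 2 := by
  simp [mul_pow, ← Finset.sum_neg_distrib]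

theorem arrowhead_I_mul_ofReal_schur_ne_zero {ι : Type*} [Fintype ι] [DecidableEq ι]
    [Nonempty ι] {α β : ℂ} {Γ : ι → ℝ} (h : IsUnit (arrowhead α β fun k => I * Γ k).det) :
    ∑ k, (Γ k : ℂ) ^ 2 + α * β ≠ 0 := by
  intro hD
  have hα : α = 0 := by
    have hcorner := arrowhead_schur_mul_inv_apply_inr_inr h
    rwa [sum_I_mul_ofReal_sq, sub_neg_eq_add, add_comm, hD, zero_mul, eq_comm] at hcorner
  have hΓ : Γ = 0 := by
    have hsumℂ : ∑ k, (Γ k : ℂ) ^ 2 = 0 := by simpa [hα] using hD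
    have hsum : ∑ k, Γ k ^ 2 = 0 := by exact_mod_cast hsumℂ
    funext k
    exact pow_eq_zero_iff two_ne_zero |>.mp <|
      (Finset.sum_eq_zero_iff_of_nonneg fun i _ => sq_nonneg (Γ i)).mp hsum k (Finset.mem_univ k)
  subst hα hΓ
  simp only [Pi.zero_apply, ofReal_zero, mul_zero] at h
  exact h.ne_zero (det_arrowhead_zero _)

theorem sub_TCmatA_eq_arrowhead (N : ℕ) (κ ωs ωr : ℝ) (Γ : Fin N → ℝ) (s : ℂ) :
    s • (1 : Matrix (Fin N ⊕ Unit) (Fin N ⊕ Unit) ℂ) - TCmatA N κ ωr (fun _ => ωs) Γ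
      = arrowhead (s + I * ωs) (s + I * ωr + κ / 2) fun k => I * Γ k := by
  ext (a | u) (b | v)
  · by_cases hab : a = b <;> simp [TCmatA, arrowhead, hab]
  · simp [TCmatA, arrowhead]
  · simp [TCmatA, arrowhead]
  · simp [TCmatA, arrowhead]
    ring

theorem TCcolB_transpose_mul_mul_TCcolB {N : ℕ} {κ : ℝ} (hκ : 0 ≤ κ)
    (X : Matrix (Fin N ⊕ Unit) (Fin N ⊕ Unit) ℂ) :
    ((TCcolB N κ)ᵀ * X * TCcolB N κ) () () = κ * X (.inr ()) (.inr ()) := by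
  have hsq : ((Real.sqrt κ : ℝ) : ℂ) * (Real.sqrt κ : ℝ) = κ := by
    rw [← ofReal_mul, Real.mul_self_sqrt hκ]
  simp [TCcolB, mul_apply, Fintype.sum_sum_type]
  linear_combination X (.inr ()) (.inr ()) * hsq

theorem sqrt_mul_sqrt_one_div_mul_sq {n x : ℝ} (hn : 0 < n) (hx : 0 ≤ x) :
    (Real.sqrt n * Real.sqrt (1 / n * x)) ^ 2 = x := by
  rw [← Real.sqrt_mul hn.le, one_div, mul_inv_cancel_left₀ hn.ne', Real.sq_sqrt hx]

/-- In the resonant case `ω₁ = ⋯ = ω_N = ω_s`, the transfer function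
`G[s] = 1 + C(sI - A)⁻¹B` equals
`((√N·Γ̄)² + (s + iω_s)(s + iω_r - κ/2)) / ((√N·Γ̄)² + (s + iω_s)(s + iω_r + κ/2))`,
where `Γ̄ = √((1/N)∑ Γ_k²)`. -/
theorem stmt_2 (N : ℕ) (hN : 1 ≤ N) (κ : ℝ) (hκ : 0 < κ) (ωs ωr : ℝ)
    (Γ : Fin N → ℝ) (s : ℂ)
    (hs : IsUnit (s • (1 : Matrix (Fin N ⊕ Unit) (Fin N ⊕ Unit) ℂ)
        - TCmatA N κ ωr (fun _ => ωs) Γ).det) :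
    ((1 : ℂ) + ((-(TCcolB N κ)ᵀ) *
        (s • (1 : Matrix (Fin N ⊕ Unit) (Fin N ⊕ Unit) ℂ)
          - TCmatA N κ ωr (fun _ => ωs) Γ)⁻¹ * TCcolB N κ) () ())
    = (((Real.sqrt N * Real.sqrt ((1 / N) * ∑ k, Γ k ^ 2) : ℝ) : ℂ) ^ 2
          + (s + Complex.I * (ωs : ℂ)) * (s + Complex.I * (ωr : ℂ) - (κ : ℂ) / 2))
      / (((Real.sqrt N * Real.sqrt ((1 / N) * ∑ k, Γ k ^ 2) : ℝ) : ℂ) ^ 2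
          + (s + Complex.I * (ωs : ℂ)) * (s + Complex.I * (ωr : ℂ) + (κ : ℂ) / 2)) := by
  have : Nonempty (Fin N) := ⟨⟨0, hN⟩⟩
  have hcoupling : (((Real.sqrt N * Real.sqrt ((1 / N) * ∑ k, Γ k ^ 2) : ℝ) : ℂ)) ^ 2
      = ∑ k, (Γ k : ℂ) ^ 2 := by
    rw [← ofReal_pow, sqrt_mul_sqrt_one_div_mul_sq (by positivity) (by positivity)]
    push_cast; rfl
  rw [sub_TCmatA_eq_arrowhead] at hs ⊢
  rw [Matrix.neg_mul, Matrix.neg_mul, neg_apply, TCcolB_transpose_mul_mul_TCcolB hκ.le, hcoupling]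
  have hD := arrowhead_I_mul_ofReal_schur_ne_zero hs
  have hcorner := arrowhead_schur_mul_inv_apply_inr_inr hs
  rw [sum_I_mul_ofReal_sq] at hcorner
  rw [eq_div_iff hD]
  linear_combination (-(κ : ℂ)) * hcorner
end

section
/- For the 2×2 matrix Â_co = -[[iω_s, i√N·Γ̄],[i√N·Γ̄, iω_r + κ/2]] with κ > 0 and Γ̄ > 0, every eigenvalue has strictly negative real part (Hurwitz stability of the controllable-observable subsystem). -/
/-!
For an eigenpair `A x = λ x`, the real part of `x* A x = λ ‖x‖²` is `Re λ · ‖x‖²`. In `Â_co` the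
coherent part `-i·H` (with `H` real symmetric) contributes nothing to `Re (x* A x)`, so only the
cavity loss survives: `Re λ · ‖x‖² = -(κ/2) |x₁|²`. Finally `x₁ ≠ 0`, since the second row of the
eigen-equation with `x₁ = 0` reads `-i√N·Γ̄ x₀ = 0`, forcing `x = 0`.
-/

open Matrix Complex

open scoped ComplexOrder in
theorem Matrix.re_eigenvalue_neg_of_re_star_dotProduct_mulVec_neg {n : Type*} [Fintype n]
    {A : Matrix n n ℂ} {μ : ℂ} {x : n → ℂ} (heig : A *ᵥ x = μ • x)
    (h : (star x ⬝ᵥ A *ᵥ x).re < 0) : μ.re < 0 := by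
  obtain ⟨hre, him⟩ := Complex.nonneg_iff.1 (dotProduct_star_self_nonneg x)
  rw [heig, dotProduct_smul, smul_eq_mul, mul_re, ← him, mul_zero, sub_zero] at h
  exact neg_of_mul_neg_left h hre

/-- The paper's `Â_co`, with the collective coupling `√N·Γ̄` written as `g`. -/
noncomputable def coupledModeMatrix (ωs ωr g κ : ℝ) : Matrix (Fin 2) (Fin 2) ℂ :=
  !![-I * ωs, -I * g; -I * g, -I * ωr - κ / 2]

theorem re_star_dotProduct_coupledModeMatrix_mulVec (ωs ωr g κ : ℝ) (x : Fin 2 → ℂ) :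
    (star x ⬝ᵥ coupledModeMatrix ωs ωr g κ *ᵥ x).re = -(κ / 2) * normSq (x 1) := by
  simp only [coupledModeMatrix, dotProduct, mulVec, Fin.sum_univ_two, Pi.star_apply,
    RCLike.star_def, of_apply, cons_val', cons_val_fin_one, cons_val_zero, cons_val_one, add_re,
    add_im, sub_re, sub_im, mul_re, mul_im, neg_re, neg_im, conj_re, conj_im, I_re, I_im, ofReal_re,
    ofReal_im, div_ofNat_re, div_ofNat_im, normSq_apply]
  ring

theorem coupledModeMatrix_eigenvector_one_ne_zero {ωs ωr g κ : ℝ} (hg : g ≠ 0) {μ : ℂ}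
    {x : Fin 2 → ℂ} (heig : coupledModeMatrix ωs ωr g κ *ᵥ x = μ • x) (hx : x ≠ 0) : x 1 ≠ 0 := by
  intro h1
  have h0 : x 0 = 0 := by
    simpa [coupledModeMatrix, mulVec, dotProduct, Fin.sum_univ_two, h1, hg, I_ne_zero] using
      congrFun heig 1
  exact hx (funext fun i => by fin_cases i <;> assumption)

/-- Hurwitz stability of the controllable-observable subsystem of the resonant
Tavis-Cummings model: every eigenvalue of
`Â_co = [[-iω_s, -i√N·Γ̄], [-i√N·Γ̄, -iω_r - κ/2]]` has strictly negative real part. -/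
theorem stmt_6 (κ : ℝ) (hκ : 0 < κ) (N : ℕ) (hN : 1 ≤ N) (Γbar : ℝ) (hΓ : 0 < Γbar)
    (ωs ωr : ℝ) (lam : ℂ) (x : Fin 2 → ℂ) (hx : x ≠ 0)
    (heig : (!![-Complex.I * (ωs : ℂ), -Complex.I * ((Real.sqrt N * Γbar : ℝ) : ℂ);
        -Complex.I * ((Real.sqrt N * Γbar : ℝ) : ℂ),
        -Complex.I * (ωr : ℂ) - (κ : ℂ) / 2]).mulVec x = lam • x) :
    lam.re < 0 := by
  have hg : Real.sqrt N * Γbar ≠ 0 :=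
    (mul_pos (Real.sqrt_pos.2 (by exact_mod_cast hN)) hΓ).ne'
  change coupledModeMatrix ωs ωr (Real.sqrt N * Γbar) κ *ᵥ x = lam • x at heig
  have hx1 := coupledModeMatrix_eigenvector_one_ne_zero hg heig hx
  refine re_eigenvalue_neg_of_re_star_dotProduct_mulVec_neg heig ?_
  rw [re_star_dotProduct_coupledModeMatrix_mulVec]
  exact mul_neg_of_neg_of_pos (by linarith) (normSq_pos.2 hx1)
end
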